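/- With the notation of the previous statement, the leapfrog iteration exactly conserves the modified energy: for all n ∈ ℕ, if (q_n, p_n) = Mⁿ (q_0, p_0), then q_n²/(2λ̂²) + p_n²/2 = q_0²/(2λ̂²) + p_0²/2. -/

import Mathlib

open Matrix

theorem apply_pow_mulVec_of_invariant {ι R β : Type*} [Fintype ι] [DecidableEq ι] [CommSemiring R]
    (A : Matrix ι ι R) (f : (ι → R) → β) (hA : ∀ v, f (A *ᵥ v) = f v) (n : ℕ) (v : ι → R) :
    f ((A ^ n) *ᵥ v) = f v := by
  induction n with
  | zero => simp
  | succ n ih => rw [pow_succ', ← mulVec_mulVec, hA, ih]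

def modifiedEnergy {K : Type*} [Field K] (lam : K) (v : Fin 2 → K) : K :=
  v 0 ^ 2 / (2 * lam ^ 2) + v 1 ^ 2 / 2

theorem modifiedEnergy_rotation_mulVec {K : Type*} [Field K] [NeZero (2 : K)] {lam c s : K}
    (hlam : lam ≠ 0) (hcs : s ^ 2 + c ^ 2 = 1) (v : Fin 2 → K) :
    modifiedEnergy lam (!![c, lam * s; -(1 / lam) * s, c] *ᵥ v) = modifiedEnergy lam v := by
  have h2 : (2 : K) ≠ 0 := two_ne_zero
  simp only [modifiedEnergy, mulVec, dotProduct, Fin.sum_univ_two, of_apply, cons_val',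
    cons_val_zero, cons_val_one, empty_val', cons_val_fin_one]
  field_simp
  linear_combination (v 0 ^ 2 + lam ^ 2 * v 1 ^ 2) * hcs

theorem stmt_11_general (lamhat φ : ℝ) (hlamhat : 0 < lamhat)
    (M : Matrix (Fin 2) (Fin 2) ℝ)
    (hM : M = !![Real.cos φ, lamhat * Real.sin φ;
                 -(1/lamhat) * Real.sin φ, Real.cos φ])
    (q0 p0 : ℝ) (n : ℕ) :
    ((M ^ n) *ᵥ ![q0, p0]) 0 ^ 2 / (2 * lamhat^2) + ((M ^ n) *ᵥ ![q0, p0]) 1 ^ 2 / 2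
      = q0^2 / (2 * lamhat^2) + p0^2 / 2 := by
  subst hM
  exact apply_pow_mulVec_of_invariant _ (modifiedEnergy lamhat)
    (modifiedEnergy_rotation_mulVec hlamhat.ne' (Real.sin_sq_add_cos_sq φ)) n ![q0, p0]

/-- The leapfrog rotation exactly conserves the modified energy. -/
theorem stmt_11 (lamhat φ : ℝ) (hlamhat : 0 < lamhat) (hφ : φ ∈ Set.Ioo 0 Real.pi)
    (M : Matrix (Fin 2) (Fin 2) ℝ)
    (hM : M = !![Real.cos φ, lamhat * Real.sin φ;
                 -(1/lamhat) * Real.sin φ, Real.cos φ])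
    (q0 p0 : ℝ) (n : ℕ) :
    ((M ^ n) *ᵥ ![q0, p0]) 0 ^ 2 / (2 * lamhat^2) + ((M ^ n) *ᵥ ![q0, p0]) 1 ^ 2 / 2
      = q0^2 / (2 * lamhat^2) + p0^2 / 2 :=
  stmt_11_general lamhat φ hlamhat M hM q0 p0 n
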